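/- arXiv:1410.1483 — 7 statements merged into one kernel-verified Lean document; each statement's English description precedes it below -/
import Mathlib

section
/- Let 0 → A →φ B →ψ C → 0 be a short exact sequence of abelian groups that is a t-extension, let A' be an abelian group and μ : A → A' a group homomorphism. Let H be the subgroup {(μ(a), −φ(a)) : a ∈ A} of A' ⊕ B, let φ' : A' → (A' ⊕ B)/H be given by a' ↦ (a', 0) + H and ψ' : (A' ⊕ B)/H → C be given by (a', b) + H ↦ ψ(b). Then the pushout sequence 0 → A' →φ' (A' ⊕ B)/H →ψ' C → 0 is a t-extension: every torsion element of C is the image under ψ' of a torsion element of (A' ⊕ B)/H, and every torsion element of (A' ⊕ B)/H lying in the kernel of ψ' is the image under φ' of a torsion element of A'. -/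
/-!
The torsion lifts of `C` along `ψ` give torsion lifts along `ψ'` by pushing them into the
`B`-summand. For the kernel, every element of `ker ψ'` has the form `(a', φ a) + H`, which equals
`φ' (a' + μ a)`; since `φ'` is injective, it reflects finite order.
-/

namespace QuotientAddGroup

open AddMonoidHom

variable {A B A' : Type*} [AddCommGroup A] [AddCommGroup B] [AddCommGroup A']

theorem mk'_range_prod_neg_mk_apply (μ : A →+ A') (φ : A →+ B) (a' : A') (a : A) :
    QuotientAddGroup.mk' (μ.prod (-φ)).range (a', φ a) =
      QuotientAddGroup.mk' (μ.prod (-φ)).range (a' + μ a, 0) := by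
  rw [QuotientAddGroup.mk'_eq_mk']
  exact ⟨(μ.prod (-φ)) a, ⟨a, rfl⟩, by ext <;> simp⟩

theorem injective_mk'_range_prod_neg_comp_inl (μ : A →+ A') {φ : A →+ B}
    (hφ : Function.Injective φ) :
    Function.Injective ((QuotientAddGroup.mk' (μ.prod (-φ)).range).comp (inl A' B)) := by
  rw [injective_iff_map_eq_zero]
  intro a' ha'
  obtain ⟨a, ha⟩ := (QuotientAddGroup.eq_zero_iff _).mp ha'
  have hφa : φ a = 0 := neg_eq_zero.mp (congrArg Prod.snd ha)
  have hμa : μ a = a' := congrArg Prod.fst ha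
  rw [← hμa, hφ (hφa.trans φ.map_zero.symm), map_zero]

end QuotientAddGroup

open AddMonoidHom QuotientAddGroup in
theorem pushout_of_tExtension_general
    {A B C A' : Type*} [AddCommGroup A] [AddCommGroup B] [AddCommGroup C] [AddCommGroup A']
    (φ : A →+ B) (ψ : B →+ C)
    (hφ : Function.Injective φ)
    (hexact : ∀ b : B, ψ b = 0 ↔ b ∈ φ.range)
    -- the given extension is a t-extension:
    (htsurj : ∀ c : C, IsOfFinAddOrder c → ∃ b : B, IsOfFinAddOrder b ∧ ψ b = c)
    (μ : A →+ A')
    -- H = {(μ a, -φ a) : a ∈ A}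
    (H : AddSubgroup (A' × B))
    (hH : H = AddMonoidHom.range ((μ.prod (-φ))))
    -- φ' : A' → (A' ⊕ B)/H, a' ↦ (a',0) + H
    (φ' : A' →+ (A' × B) ⧸ H)
    (hφ' : ∀ a' : A', φ' a' = QuotientAddGroup.mk' H (a', 0))
    -- ψ' : (A' ⊕ B)/H → C, (a', b) + H ↦ ψ b
    (ψ' : (A' × B) ⧸ H →+ C)
    (hψ' : ∀ p : A' × B, ψ' (QuotientAddGroup.mk' H p) = ψ p.2) :
    (∀ c : C, IsOfFinAddOrder c →
      ∃ q : (A' × B) ⧸ H, IsOfFinAddOrder q ∧ ψ' q = c) ∧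
    (∀ q : (A' × B) ⧸ H, IsOfFinAddOrder q → ψ' q = 0 →
      ∃ a' : A', IsOfFinAddOrder a' ∧ φ' a' = q) := by
  subst hH
  obtain rfl : φ' = (QuotientAddGroup.mk' _).comp (inl A' B) := AddMonoidHom.ext hφ'
  constructor
  · intro c hc
    obtain ⟨b, hb, rfl⟩ := htsurj c hc
    exact ⟨QuotientAddGroup.mk' _ (inr A' B b),
      ((QuotientAddGroup.mk' _).comp (inr A' B)).isOfFinAddOrder hb, hψ' _⟩
  · intro q hq hq0
    obtain ⟨⟨a', b⟩, rfl⟩ := QuotientAddGroup.mk'_surjective _ q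
    obtain ⟨a, rfl⟩ := (hexact b).mp ((hψ' _).symm.trans hq0)
    have hq_eq : (QuotientAddGroup.mk' _).comp (inl A' B) (a' + μ a) =
        QuotientAddGroup.mk' (μ.prod (-φ)).range (a', φ a) :=
      (mk'_range_prod_neg_mk_apply μ φ a' a).symm
    rw [← hq_eq, (injective_mk'_range_prod_neg_comp_inl μ hφ).isOfFinAddOrder_iff] at hq
    exact ⟨_, hq, hq_eq⟩

/-- The pushout of a t-extension of abelian groups along `μ : A →+ A'` is a t-extension. -/
theorem pushout_of_tExtension
    {A B C A' : Type*} [AddCommGroup A] [AddCommGroup B] [AddCommGroup C] [AddCommGroup A']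
    (φ : A →+ B) (ψ : B →+ C)
    (hφ : Function.Injective φ) (hψ : Function.Surjective ψ)
    (hexact : ∀ b : B, ψ b = 0 ↔ b ∈ φ.range)
    -- the given extension is a t-extension:
    (htsurj : ∀ c : C, IsOfFinAddOrder c → ∃ b : B, IsOfFinAddOrder b ∧ ψ b = c)
    (htker : ∀ b : B, IsOfFinAddOrder b → ψ b = 0 →
      ∃ a : A, IsOfFinAddOrder a ∧ φ a = b)
    (μ : A →+ A')
    -- H = {(μ a, -φ a) : a ∈ A}
    (H : AddSubgroup (A' × B))
    (hH : H = AddMonoidHom.range ((μ.prod (-φ))))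
    -- φ' : A' → (A' ⊕ B)/H, a' ↦ (a',0) + H
    (φ' : A' →+ (A' × B) ⧸ H)
    (hφ' : ∀ a' : A', φ' a' = QuotientAddGroup.mk' H (a', 0))
    -- ψ' : (A' ⊕ B)/H → C, (a', b) + H ↦ ψ b
    (ψ' : (A' × B) ⧸ H →+ C)
    (hψ' : ∀ p : A' × B, ψ' (QuotientAddGroup.mk' H p) = ψ p.2) :
    (∀ c : C, IsOfFinAddOrder c →
      ∃ q : (A' × B) ⧸ H, IsOfFinAddOrder q ∧ ψ' q = c) ∧
    (∀ q : (A' × B) ⧸ H, IsOfFinAddOrder q → ψ' q = 0 →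
      ∃ a' : A', IsOfFinAddOrder a' ∧ φ' a' = q) :=
  pushout_of_tExtension_general φ ψ hφ hexact htsurj μ H hH φ' hφ' ψ' hψ'
end

section
/- Let 0 → A →φ B →ψ C → 0 be a short exact sequence of abelian groups that is a t-extension, let C' be an abelian group and γ : C' → C a group homomorphism. Let B' be the subgroup {(b, c') ∈ B ⊕ C' : ψ(b) = γ(c')}, let φ' : A → B' be given by a ↦ (φ(a), 0) and ψ' : B' → C' be given by (b, c') ↦ c'. Then the pullback sequence 0 → A →φ' B' →ψ' C' → 0 is a t-extension: every torsion element of C' is the image under ψ' of a torsion element of B', and every torsion element of B' lying in the kernel of ψ' is the image under φ' of a torsion element of A. -/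
section Pullback

variable {A B C C' : Type*} [AddCommGroup A] [AddCommGroup B] [AddCommGroup C] [AddCommGroup C']
  {ψ : B →+ C} {γ : C' →+ C}

theorem exists_isOfFinAddOrder_mem_pullback_snd_eq
    (htsurj : ∀ c : C, IsOfFinAddOrder c → ∃ b : B, IsOfFinAddOrder b ∧ ψ b = c)
    {B' : AddSubgroup (B × C')} (hB' : ∀ p : B × C', p ∈ B' ↔ ψ p.1 = γ p.2)
    {c' : C'} (hc' : IsOfFinAddOrder c') :
    ∃ p : B', IsOfFinAddOrder p ∧ (p : B × C').2 = c' := by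
  obtain ⟨b, hb, hbc⟩ := htsurj (γ c') (γ.isOfFinAddOrder hc')
  exact ⟨⟨(b, c'), (hB' _).2 hbc⟩, AddSubmonoid.isOfFinAddOrder_coe.1 (hb.prod_mk hc'), rfl⟩

theorem exists_isOfFinAddOrder_eq_of_pullback_snd_eq_zero {φ : A →+ B}
    (htker : ∀ b : B, IsOfFinAddOrder b → ψ b = 0 → ∃ a : A, IsOfFinAddOrder a ∧ φ a = b)
    {p : B × C'} (hp : IsOfFinAddOrder p) (hpullback : ψ p.1 = γ p.2) (hp₂ : p.2 = 0) :
    ∃ a : A, IsOfFinAddOrder a ∧ (φ a, 0) = p := by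
  obtain ⟨a, ha, hab⟩ := htker p.1 ((AddMonoidHom.fst B C').isOfFinAddOrder hp)
    (by rw [hpullback, hp₂, map_zero])
  exact ⟨a, ha, Prod.ext hab hp₂.symm⟩

end Pullback

theorem pullback_of_tExtension_general
    {A B C C' : Type*} [AddCommGroup A] [AddCommGroup B] [AddCommGroup C] [AddCommGroup C']
    (φ : A →+ B) (ψ : B →+ C)
    -- the given extension is a t-extension:
    (htsurj : ∀ c : C, IsOfFinAddOrder c → ∃ b : B, IsOfFinAddOrder b ∧ ψ b = c)
    (htker : ∀ b : B, IsOfFinAddOrder b → ψ b = 0 →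
      ∃ a : A, IsOfFinAddOrder a ∧ φ a = b)
    (γ : C' →+ C)
    -- B' = {(b, c') : ψ b = γ c'}
    (B' : AddSubgroup (B × C'))
    (hB' : ∀ p : B × C', p ∈ B' ↔ ψ p.1 = γ p.2)
    -- φ' : A → B', a ↦ (φ a, 0)
    (φ' : A →+ B')
    (hφ' : ∀ a : A, (φ' a : B × C') = (φ a, 0))
    -- ψ' : B' → C', (b, c') ↦ c'
    (ψ' : B' →+ C')
    (hψ' : ∀ p : B', ψ' p = (p : B × C').2) :
    (∀ c' : C', IsOfFinAddOrder c' →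
      ∃ p : B', IsOfFinAddOrder p ∧ ψ' p = c') ∧
    (∀ p : B', IsOfFinAddOrder p → ψ' p = 0 →
      ∃ a : A, IsOfFinAddOrder a ∧ φ' a = p) := by
  refine ⟨fun c' hc' => ?_, fun p hp hp₀ => ?_⟩
  · obtain ⟨p, hp, rfl⟩ := exists_isOfFinAddOrder_mem_pullback_snd_eq htsurj hB' hc'
    exact ⟨p, hp, hψ' p⟩
  · rw [hψ'] at hp₀
    obtain ⟨a, ha, hap⟩ := exists_isOfFinAddOrder_eq_of_pullback_snd_eq_zero htker
      (AddSubmonoid.isOfFinAddOrder_coe.2 hp) ((hB' p).1 p.2) hp₀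
    exact ⟨a, ha, Subtype.ext ((hφ' a).trans hap)⟩

/-- The pullback of a t-extension of abelian groups along `γ : C' →+ C` is a t-extension. -/
theorem pullback_of_tExtension
    {A B C C' : Type*} [AddCommGroup A] [AddCommGroup B] [AddCommGroup C] [AddCommGroup C']
    (φ : A →+ B) (ψ : B →+ C)
    (hφ : Function.Injective φ) (hψ : Function.Surjective ψ)
    (hexact : ∀ b : B, ψ b = 0 ↔ b ∈ φ.range)
    -- the given extension is a t-extension:
    (htsurj : ∀ c : C, IsOfFinAddOrder c → ∃ b : B, IsOfFinAddOrder b ∧ ψ b = c)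
    (htker : ∀ b : B, IsOfFinAddOrder b → ψ b = 0 →
      ∃ a : A, IsOfFinAddOrder a ∧ φ a = b)
    (γ : C' →+ C)
    -- B' = {(b, c') : ψ b = γ c'}
    (B' : AddSubgroup (B × C'))
    (hB' : ∀ p : B × C', p ∈ B' ↔ ψ p.1 = γ p.2)
    -- φ' : A → B', a ↦ (φ a, 0)
    (φ' : A →+ B')
    (hφ' : ∀ a : A, (φ' a : B × C') = (φ a, 0))
    -- ψ' : B' → C', (b, c') ↦ c'
    (ψ' : B' →+ C')
    (hψ' : ∀ p : B', ψ' p = (p : B × C').2) :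
    (∀ c' : C', IsOfFinAddOrder c' →
      ∃ p : B', IsOfFinAddOrder p ∧ ψ' p = c') ∧
    (∀ p : B', IsOfFinAddOrder p → ψ' p = 0 →
      ∃ a : A, IsOfFinAddOrder a ∧ φ' a = p) :=
  pullback_of_tExtension_general φ ψ htsurj htker γ B' hB' φ' hφ' ψ' hψ'
end

section
/- Let 0 → A →φ B →ψ C → 0 be a short exact sequence of abelian groups that is a t-extension, where A is torsion-free and C is a torsion group. Then B is the internal direct sum of φ(A) and the torsion subgroup tB of B (that is, B = φ(A) + tB and φ(A) ∩ tB = 0), and the sequence splits: there exists a group homomorphism s : C → B with ψ ∘ s = id_C. -/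
/-!
Exactness together with a torsion lift of `ψ b` writes every `b` as `φ a` plus a torsion
element. A torsion element of `φ(A)` comes, by the t-extension property, from a torsion element
of the torsion-free group `A`, so it vanishes; hence `ψ` is injective on `tB`. Since `C` is
torsion, `ψ` is also onto from `tB`, so it restricts to an isomorphism `tB ≃ C`, whose inverse
is a section of `ψ`.
-/

section TExtension

variable {A B C : Type*} [AddCommGroup A] [AddCommGroup B] [AddCommGroup C]

theorem eq_zero_of_isOfFinAddOrder_of_map_eq_zero (φ : A →+ B) (ψ : B →+ C)
    (htker : ∀ b : B, IsOfFinAddOrder b → ψ b = 0 → ∃ a : A, IsOfFinAddOrder a ∧ φ a = b)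
    (hA : ∀ a : A, IsOfFinAddOrder a → a = 0) (b : B) (hb : IsOfFinAddOrder b)
    (hψb : ψ b = 0) : b = 0 := by
  obtain ⟨a, ha, rfl⟩ := htker b hb hψb
  rw [hA a ha, map_zero]

theorem exists_eq_map_add_isOfFinAddOrder (φ : A →+ B) (ψ : B →+ C)
    (hker : ∀ b : B, ψ b = 0 → b ∈ φ.range)
    (hlift : ∀ c : C, ∃ b : B, IsOfFinAddOrder b ∧ ψ b = c) (b : B) :
    ∃ a : A, ∃ t : B, IsOfFinAddOrder t ∧ b = φ a + t := by
  obtain ⟨t, ht, hψt⟩ := hlift (ψ b)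
  obtain ⟨a, ha⟩ := hker (b - t) (by rw [map_sub, hψt, sub_self])
  exact ⟨a, t, ht, by rw [ha, sub_add_cancel]⟩

theorem bijective_comp_torsion_subtype (ψ : B →+ C)
    (hinj : ∀ b : B, IsOfFinAddOrder b → ψ b = 0 → b = 0)
    (hlift : ∀ c : C, ∃ b : B, IsOfFinAddOrder b ∧ ψ b = c) :
    Function.Bijective (ψ.comp (AddCommGroup.torsion B).subtype) := by
  refine ⟨(injective_iff_map_eq_zero _).2 fun t ht => Subtype.ext (hinj t t.2 ht), fun c => ?_⟩
  obtain ⟨b, hb, rfl⟩ := hlift c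
  exact ⟨⟨b, hb⟩, rfl⟩

theorem exists_comp_eq_id_of_isOfFinAddOrder (ψ : B →+ C)
    (hinj : ∀ b : B, IsOfFinAddOrder b → ψ b = 0 → b = 0)
    (hlift : ∀ c : C, ∃ b : B, IsOfFinAddOrder b ∧ ψ b = c) :
    ∃ s : C →+ B, ψ.comp s = AddMonoidHom.id C := by
  let e := AddEquiv.ofBijective _ (bijective_comp_torsion_subtype ψ hinj hlift)
  exact ⟨(AddCommGroup.torsion B).subtype.comp e.symm.toAddMonoidHom,
    AddMonoidHom.ext e.apply_symm_apply⟩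

end TExtension

theorem tExtension_splits_of_torsionFree_by_torsion_general
    {A B C : Type*} [AddCommGroup A] [AddCommGroup B] [AddCommGroup C]
    (φ : A →+ B) (ψ : B →+ C)
    (hexact : ∀ b : B, ψ b = 0 ↔ b ∈ φ.range)
    -- the sequence is a t-extension:
    (htsurj : ∀ c : C, IsOfFinAddOrder c → ∃ b : B, IsOfFinAddOrder b ∧ ψ b = c)
    (htker : ∀ b : B, IsOfFinAddOrder b → ψ b = 0 →
      ∃ a : A, IsOfFinAddOrder a ∧ φ a = b)
    -- A is torsion-free:
    (hA : ∀ a : A, IsOfFinAddOrder a → a = 0)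
    -- C is a torsion group:
    (hC : ∀ c : C, IsOfFinAddOrder c) :
    -- B = φ(A) + tB:
    (∀ b : B, ∃ a : A, ∃ t : B, IsOfFinAddOrder t ∧ b = φ a + t) ∧
    -- φ(A) ∩ tB = 0:
    (∀ b : B, b ∈ φ.range → IsOfFinAddOrder b → b = 0) ∧
    -- the sequence splits:
    (∃ s : C →+ B, ψ.comp s = AddMonoidHom.id C) := by
  have hinj := eq_zero_of_isOfFinAddOrder_of_map_eq_zero φ ψ htker hA
  have hlift : ∀ c : C, ∃ b : B, IsOfFinAddOrder b ∧ ψ b = c := fun c => htsurj c (hC c)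
  exact ⟨exists_eq_map_add_isOfFinAddOrder φ ψ (fun b => (hexact b).1) hlift,
    fun b hb ht => hinj b ht ((hexact b).2 hb),
    exists_comp_eq_id_of_isOfFinAddOrder ψ hinj hlift⟩

/-- A t-extension of a torsion-free group by a torsion group splits, and the middle
group is the internal direct sum of `φ(A)` and its torsion subgroup. -/
theorem tExtension_splits_of_torsionFree_by_torsion
    {A B C : Type*} [AddCommGroup A] [AddCommGroup B] [AddCommGroup C]
    (φ : A →+ B) (ψ : B →+ C)
    (hφ : Function.Injective φ) (hψ : Function.Surjective ψ)
    (hexact : ∀ b : B, ψ b = 0 ↔ b ∈ φ.range)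
    -- the sequence is a t-extension:
    (htsurj : ∀ c : C, IsOfFinAddOrder c → ∃ b : B, IsOfFinAddOrder b ∧ ψ b = c)
    (htker : ∀ b : B, IsOfFinAddOrder b → ψ b = 0 →
      ∃ a : A, IsOfFinAddOrder a ∧ φ a = b)
    -- A is torsion-free:
    (hA : ∀ a : A, IsOfFinAddOrder a → a = 0)
    -- C is a torsion group:
    (hC : ∀ c : C, IsOfFinAddOrder c) :
    -- B = φ(A) + tB:
    (∀ b : B, ∃ a : A, ∃ t : B, IsOfFinAddOrder t ∧ b = φ a + t) ∧
    -- φ(A) ∩ tB = 0: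
    (∀ b : B, b ∈ φ.range → IsOfFinAddOrder b → b = 0) ∧
    -- the sequence splits:
    (∃ s : C →+ B, ψ.comp s = AddMonoidHom.id C) :=
  tExtension_splits_of_torsionFree_by_torsion_general φ ψ hexact htsurj htker hA hC
end

section
/- Let A be an abelian group and suppose that every short exact sequence 0 → A →φ B →ψ C → 0 of abelian groups that is a t-extension splits (there exists a homomorphism s : C → B with ψ ∘ s = id_C). Then the torsion subgroup tA of A is a divisible group. -/
/-!
Adjoin to `A` an element `e` with `n • e = a`. Since `n • (k • e) = k • a` is torsion, every class
of `B / A` lifts to the torsion element `k • e`, so `A → B → B / A` is a t-extension. A splitting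
`s` sends the class of `e` to some `e + y` with `y ∈ A` and `n • (e + y) = 0`, whence
`a = n • (-y)`; and `-y` is torsion because its multiple `a` is.
-/

universe u

open QuotientAddGroup

section

variable {A : Type u} [AddCommGroup A]

/-- `A` with an `n`-th root of `a` adjoined: the pushout of `n • · : ℤ → ℤ` along `1 ↦ a`. -/
abbrev RootExt (a : A) (n : ℕ) : Type u :=
  (A × ℤ) ⧸ AddSubgroup.zmultiples ((a, -(n : ℤ)) : A × ℤ)

namespace RootExt

variable (a : A) (n : ℕ)

def incl : A →+ RootExt a n :=
  (mk' _).comp (AddMonoidHom.inl A ℤ)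

def root : RootExt a n :=
  ((0 : A), (1 : ℤ))

theorem nsmul_root : n • root a n = incl a n a := by
  rw [root, incl, AddMonoidHom.comp_apply, mk'_apply, ← mk_nsmul, QuotientAddGroup.eq]
  exact ⟨1, by ext <;> simp⟩

theorem incl_injective (hn : n ≠ 0) : Function.Injective (incl a n) := by
  refine (injective_iff_map_eq_zero _).2 fun x hx => ?_
  obtain ⟨m, hm⟩ := (eq_zero_iff _).1 hx
  have hm0 : m = 0 := by simpa [hn] using congrArg Prod.snd hm
  simpa [hm0] using (congrArg Prod.fst hm).symm

theorem exists_eq_incl_add_zsmul_root (b : RootExt a n) :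
    ∃ (x : A) (k : ℤ), b = incl a n x + k • root a n := by
  obtain ⟨⟨x, k⟩, rfl⟩ := mk_surjective b
  refine ⟨x, k, ?_⟩
  rw [incl, root, AddMonoidHom.comp_apply, mk'_apply, ← mk_zsmul, ← mk_add]
  congr 1
  ext <;> simp

end RootExt

end

namespace QuotientAddGroup

variable {A : Type*} [AddCommGroup A] {B : Type*} [AddCommGroup B] {φ : A →+ B} {a : A} {n : ℕ} {e : B}

theorem exists_isOfFinAddOrder_mk_eq (ha : IsOfFinAddOrder a) (hn : n ≠ 0) (he : n • e = φ a)
    (hgen : ∀ b, ∃ (x : A) (k : ℤ), b = φ x + k • e) (c : B ⧸ φ.range) :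
    ∃ b : B, IsOfFinAddOrder b ∧ (b : B ⧸ φ.range) = c := by
  obtain ⟨b, rfl⟩ := mk_surjective c
  obtain ⟨x, k, rfl⟩ := hgen b
  refine ⟨k • e, ?_, ?_⟩
  · have hke : n • k • e = φ (k • a) := by rw [smul_comm, he, map_zsmul]
    exact (hke ▸ φ.isOfFinAddOrder ha.zsmul).of_nsmul hn
  · rw [QuotientAddGroup.eq]
    exact ⟨x, by simp⟩

theorem exists_nsmul_eq_of_mk_range_splits (hφ : Function.Injective φ) (he : n • e = φ a)
    (s : B ⧸ φ.range →+ B) (hs : (mk' φ.range).comp s = AddMonoidHom.id _) :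
    ∃ x : A, n • x = a := by
  have hsec : ((s e : B) : B ⧸ φ.range) = e := DFunLike.congr_fun hs (e : B ⧸ φ.range)
  obtain ⟨y, hy⟩ : s e - e ∈ φ.range := by
    rw [← eq_zero_iff, mk_sub, hsec, sub_self]
  have hne : n • s e = 0 := by
    rw [← map_nsmul, ← mk_nsmul, he, (eq_zero_iff (φ a)).2 (φ.mem_range.2 ⟨a, rfl⟩), map_zero]
  refine ⟨-y, hφ ?_⟩
  rw [map_nsmul, map_neg, hy, smul_neg, smul_sub, hne, he]
  abel

end QuotientAddGroup

/-- If every t-extension of `A` splits, then the torsion subgroup of `A` is divisible. -/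
theorem torsion_divisible_of_tExtensions_split
    (A : Type u) [AddCommGroup A]
    -- every t-extension of A splits:
    (hsplit : ∀ (B C : Type u) (_ : AddCommGroup B) (_ : AddCommGroup C)
      (φ : A →+ B) (ψ : B →+ C),
      Function.Injective φ → Function.Surjective ψ →
      (∀ b : B, ψ b = 0 ↔ b ∈ φ.range) →
      (∀ c : C, IsOfFinAddOrder c → ∃ b : B, IsOfFinAddOrder b ∧ ψ b = c) →
      (∀ b : B, IsOfFinAddOrder b → ψ b = 0 → ∃ a : A, IsOfFinAddOrder a ∧ φ a = b) →
      ∃ s : C →+ B, ψ.comp s = AddMonoidHom.id C) :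
    -- tA is divisible:
    ∀ a : A, IsOfFinAddOrder a → ∀ n : ℕ, 0 < n →
      ∃ x : A, IsOfFinAddOrder x ∧ n • x = a := by
  intro a ha n hn
  set φ := RootExt.incl a n
  have hφ : Function.Injective φ := RootExt.incl_injective a n hn.ne'
  obtain ⟨s, hs⟩ := hsplit _ _ inferInstance inferInstance φ (mk' φ.range) hφ
    (mk'_surjective _) (fun b => eq_zero_iff b)
    (fun c _ => exists_isOfFinAddOrder_mk_eq ha hn.ne' (RootExt.nsmul_root a n)
      (RootExt.exists_eq_incl_add_zsmul_root a n) c)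
    (fun b hb hb0 => by
      obtain ⟨x, rfl⟩ := (eq_zero_iff b).1 hb0
      exact ⟨x, (hφ.isOfFinAddOrder_iff).1 hb, rfl⟩)
  obtain ⟨x, hx⟩ := exists_nsmul_eq_of_mk_range_splits hφ (RootExt.nsmul_root a n) s hs
  exact ⟨x, (hx ▸ ha).of_nsmul hn.ne', hx⟩
end

section
/- Let A be an abelian group and suppose that every short exact sequence 0 → A →φ B →ψ C → 0 of abelian groups that is a t-extension splits. Then the torsion subgroup tA is divisible, A is isomorphic to the direct sum tA ⊕ A/tA, and A/tA is cotorsion, i.e., every short exact sequence 0 → A/tA → X → ℚ → 0 of abelian groups splits. -/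
/-!
If `a` has finite order and `n ≠ 0`, adjoining an `n`-th root of `a` freely gives a t-extension of
`A` in which the root is torsion; a retraction onto `A` carries it to a torsion `n`-th root of `a`.
So `tA` is divisible, hence an injective `ℤ`-module, hence a direct summand of `A`.
An extension `0 → A/tA → X → ℚ → 0` becomes, after adding `tA` to both ends, an extension of
`A ≅ tA × A/tA` with torsion-free cokernel; such extensions are automatically t-extensions.
-/

universe u

open Function

section TExtension

variable {A B C : Type*} [AddCommGroup A] [AddCommGroup B] [AddCommGroup C]

/-- Exactness of `0 → tA → tB → tC → 0` is recorded only as surjectivity of `tB → tC`; exactness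
at `tA` and `tB` follows from that of `0 → A → B → C → 0`
(`IsTExtension.exists_isOfFinAddOrder_of_apply_eq_zero`). -/
structure IsTExtension (φ : A →+ B) (ψ : B →+ C) : Prop where
  injective : Injective φ
  surjective : Surjective ψ
  exact : Exact φ ψ
  exists_isOfFinAddOrder_preimage : ∀ c, IsOfFinAddOrder c → ∃ b, IsOfFinAddOrder b ∧ ψ b = c

variable {φ : A →+ B} {ψ : B →+ C}

theorem IsTExtension.exists_isOfFinAddOrder_of_apply_eq_zero (h : IsTExtension φ ψ) {b : B}
    (hb : IsOfFinAddOrder b) (hb0 : ψ b = 0) : ∃ a, IsOfFinAddOrder a ∧ φ a = b := by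
  obtain ⟨a, rfl⟩ := (h.exact b).1 hb0
  exact ⟨a, h.injective.isOfFinAddOrder_iff.1 hb, rfl⟩

theorem IsTExtension.of_isAddTorsionFree [IsAddTorsionFree C] (hφ : Injective φ)
    (hψ : Surjective ψ) (h : Exact φ ψ) : IsTExtension φ ψ where
  injective := hφ
  surjective := hψ
  exact := h
  exists_isOfFinAddOrder_preimage c hc := by
    obtain rfl : c = 0 := by
      by_contra hc0
      exact not_isOfFinAddOrder_of_isAddTorsionFree hc0 hc
    exact ⟨0, IsOfFinAddOrder.zero, map_zero ψ⟩

theorem Function.Exact.exists_retraction_of_section (h : Exact φ ψ) (hφ : Injective φ)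
    (hψ : Surjective ψ) {s : C →+ B} (hs : ψ.comp s = .id C) :
    ∃ r : B →+ A, r.comp φ = .id A := by
  have hsection : ∃ l, ψ.toIntLinearMap ∘ₗ l = .id :=
    ⟨s.toIntLinearMap, LinearMap.ext fun c => DFunLike.congr_fun hs c⟩
  obtain ⟨l, hl⟩ := ((Exact.split_tfae (f := φ.toIntLinearMap) (g := ψ.toIntLinearMap)
    h hφ hψ).out 0 1).1 hsection
  exact ⟨l.toAddMonoidHom, AddMonoidHom.ext (LinearMap.congr_fun hl)⟩

theorem Function.Exact.nonempty_addEquiv_prod_of_retraction (h : Exact φ ψ) (hψ : Surjective ψ)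
    {r : B →+ A} (hr : r.comp φ = .id A) : Nonempty (B ≃+ A × C) :=
  ⟨(Exact.splitInjectiveEquiv (f := φ.toIntLinearMap) (g := ψ.toIntLinearMap) h hψ
    ⟨r.toIntLinearMap, LinearMap.ext fun a => DFunLike.congr_fun hr a⟩).1.toAddEquiv⟩

end TExtension

theorem AddSubgroup.nonempty_addEquiv_prod_quotient_of_divisibleBy {A : Type*} [AddCommGroup A]
    (S : AddSubgroup A) [DivisibleBy S ℤ] : Nonempty (A ≃+ S × A ⧸ S) := by
  obtain ⟨r, hr⟩ := (Module.Baer.of_divisible S).extension_property_addMonoidHom S.subtype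
    Subtype.val_injective (.id S)
  have hexact : Exact S.subtype (QuotientAddGroup.mk' S) := fun a => by
    simp [QuotientAddGroup.eq_zero_iff]
  exact hexact.nonempty_addEquiv_prod_of_retraction (QuotientAddGroup.mk'_surjective S) hr

/-- The pushout of `(· • a) : ℤ → A` and `(n • ·) : ℤ → ℤ`. -/
abbrev RootExtension {A : Type*} [AddCommGroup A] (a : A) (n : ℕ) : Type _ :=
  (A × ℤ) ⧸ AddSubgroup.zmultiples (a, -(n : ℤ))

namespace RootExtension

variable {A : Type*} [AddCommGroup A] (a : A) (n : ℕ)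

def inl : A →+ RootExtension a n :=
  (QuotientAddGroup.mk' _).comp (AddMonoidHom.inl A ℤ)

def root : RootExtension a n :=
  QuotientAddGroup.mk ((0 : A), (1 : ℤ))

theorem nsmul_root : n • root a n = inl a n a := by
  rw [root, ← QuotientAddGroup.mk_nsmul, inl, AddMonoidHom.comp_apply, QuotientAddGroup.mk'_apply,
    QuotientAddGroup.eq_iff_sub_mem]
  exact neg_mem_iff.1 (by simp)

variable {a n}

theorem inl_injective (hn : n ≠ 0) : Injective (inl a n) := by
  refine (injective_iff_map_eq_zero _).2 fun a' ha' => ?_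
  obtain ⟨k, hk⟩ := AddSubgroup.mem_zmultiples_iff.1 ((QuotientAddGroup.eq_zero_iff _).1 ha')
  have hk0 : k = 0 := by simpa [hn] using congrArg Prod.snd hk
  simpa [hk0] using (congrArg Prod.fst hk).symm

theorem exists_inl_add_zsmul_root (x : RootExtension a n) : ∃ (a' : A) (k : ℤ),
    inl a n a' + k • root a n = x := by
  obtain ⟨⟨a', k⟩, rfl⟩ := QuotientAddGroup.mk_surjective x
  refine ⟨a', k, ?_⟩
  rw [root, ← QuotientAddGroup.mk_zsmul, inl, AddMonoidHom.comp_apply, QuotientAddGroup.mk'_apply,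
    ← QuotientAddGroup.mk_add]
  simp

theorem isOfFinAddOrder_root (ha : IsOfFinAddOrder a) (hn : n ≠ 0) :
    IsOfFinAddOrder (root a n) :=
  .of_nsmul (by rw [nsmul_root]; exact (inl a n).isOfFinAddOrder ha) hn

theorem isTExtension (ha : IsOfFinAddOrder a) (hn : n ≠ 0) :
    IsTExtension (C := RootExtension a n ⧸ (inl a n).range) (inl a n)
      (QuotientAddGroup.mk' (inl a n).range) where
  injective := inl_injective hn
  surjective := QuotientAddGroup.mk'_surjective _
  exact x := QuotientAddGroup.eq_zero_iff x
  exists_isOfFinAddOrder_preimage c _ := by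
    obtain ⟨x, rfl⟩ := QuotientAddGroup.mk'_surjective _ c
    obtain ⟨a', k, rfl⟩ := exists_inl_add_zsmul_root x
    refine ⟨k • root a n, (isOfFinAddOrder_root ha hn).zsmul, ?_⟩
    exact (QuotientAddGroup.mk'_eq_mk' _).2 ⟨inl a n a', ⟨a', rfl⟩, add_comm _ _⟩

end RootExtension

def IsTInjective (A : Type u) [AddCommGroup A] : Prop :=
  ∀ (B C : Type u) [AddCommGroup B] [AddCommGroup C] (φ : A →+ B) (ψ : B →+ C),
    IsTExtension φ ψ → ∃ s : C →+ B, ψ.comp s = .id C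

namespace IsTInjective

variable {A : Type u} [AddCommGroup A]

theorem exists_isOfFinAddOrder_nsmul_eq (hA : IsTInjective A) {a : A} (ha : IsOfFinAddOrder a)
    {n : ℕ} (hn : n ≠ 0) : ∃ x, IsOfFinAddOrder x ∧ n • x = a := by
  have h := RootExtension.isTExtension ha hn
  obtain ⟨s, hs⟩ := hA _ _ _ _ h
  obtain ⟨r, hr⟩ := h.exact.exists_retraction_of_section
    (C := RootExtension a n ⧸ (RootExtension.inl a n).range) h.injective h.surjective hs
  refine ⟨r (RootExtension.root a n), r.isOfFinAddOrder (RootExtension.isOfFinAddOrder_root ha hn),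
    ?_⟩
  rw [← map_nsmul, RootExtension.nsmul_root, ← AddMonoidHom.comp_apply, hr,
    AddMonoidHom.id_apply]

theorem surjective_nsmul_torsion (hA : IsTInjective A) {n : ℕ} (hn : n ≠ 0) :
    Surjective fun t : AddCommGroup.torsion A => n • t := by
  rintro ⟨a, ha⟩
  obtain ⟨x, hx, rfl⟩ := hA.exists_isOfFinAddOrder_nsmul_eq ((AddCommGroup.mem_torsion a).1 ha) hn
  exact ⟨⟨x, (AddCommGroup.mem_torsion x).2 hx⟩, rfl⟩

theorem nonempty_addEquiv_torsion_prod (hA : IsTInjective A) :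
    Nonempty (A ≃+ AddCommGroup.torsion A × A ⧸ AddCommGroup.torsion A) := by
  let := divisibleByOfSMulRightSurj (AddCommGroup.torsion A) ℕ hA.surjective_nsmul_torsion
  let := AddGroup.divisibleByIntOfDivisibleByNat (AddCommGroup.torsion A)
  exact (AddCommGroup.torsion A).nonempty_addEquiv_prod_quotient_of_divisibleBy

theorem exists_section_of_addEquiv_prod (hA : IsTInjective A) {T Q X C : Type u}
    [AddCommGroup T] [AddCommGroup Q] [AddCommGroup X] [AddCommGroup C] [IsAddTorsionFree C]
    (e : A ≃+ T × Q) {ι : Q →+ X} {π : X →+ C} (hι : Injective ι) (hπ : Surjective π)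
    (h : Exact ι π) : ∃ s : C →+ X, π.comp s = .id C := by
  let φ : A →+ T × X := (AddMonoidHom.prodMap (.id T) ι).comp e
  let ψ : T × X →+ C := π.comp (AddMonoidHom.snd T X)
  have hφ : Injective φ := (Prod.map_injective.2 ⟨injective_id, hι⟩).comp e.injective
  have hψ : Surjective ψ := hπ.comp Prod.snd_surjective
  have hexact : Exact φ ψ := by
    rintro ⟨t, x⟩
    refine (h x).trans ⟨?_, ?_⟩
    · rintro ⟨q, rfl⟩
      exact ⟨e.symm (t, q), by simp [φ]⟩
    · rintro ⟨a, ha⟩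
      exact ⟨(e a).2, congrArg Prod.snd ha⟩
  obtain ⟨s, hs⟩ := hA _ _ _ _ (IsTExtension.of_isAddTorsionFree hφ hψ hexact)
  exact ⟨(AddMonoidHom.snd T X).comp s, hs⟩

theorem exists_section_rat_of_addEquiv_prod (hA : IsTInjective A) {T Q X : Type u}
    [AddCommGroup T] [AddCommGroup Q] [AddCommGroup X] (e : A ≃+ T × Q) {ι : Q →+ X}
    {π : X →+ ℚ} (hι : Injective ι) (hπ : Surjective π) (h : Exact ι π) :
    ∃ s : ℚ →+ X, π.comp s = .id ℚ := by
  let up : ℚ ≃+ ULift.{u} ℚ := AddEquiv.ulift.symm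
  have : IsAddTorsionFree (ULift.{u} ℚ) :=
    up.symm.injective.isAddTorsionFree up.symm.toAddMonoidHom
  obtain ⟨s, hs⟩ := hA.exists_section_of_addEquiv_prod e (π := up.toAddMonoidHom.comp π) hι
    (up.surjective.comp hπ) fun x => by simpa using h x
  refine ⟨s.comp up.toAddMonoidHom, AddMonoidHom.ext fun q => up.injective ?_⟩
  exact DFunLike.congr_fun hs (up q)

end IsTInjective

/-- If every t-extension of `A` splits, then `tA` is divisible, `A ≅ tA ⊕ A/tA`, and
`A/tA` is cotorsion. -/
theorem structure_of_tInjective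
    (A : Type u) [AddCommGroup A]
    -- every t-extension of A splits:
    (hsplit : ∀ (B C : Type u) (_ : AddCommGroup B) (_ : AddCommGroup C)
      (φ : A →+ B) (ψ : B →+ C),
      Function.Injective φ → Function.Surjective ψ →
      (∀ b : B, ψ b = 0 ↔ b ∈ φ.range) →
      (∀ c : C, IsOfFinAddOrder c → ∃ b : B, IsOfFinAddOrder b ∧ ψ b = c) →
      (∀ b : B, IsOfFinAddOrder b → ψ b = 0 → ∃ a : A, IsOfFinAddOrder a ∧ φ a = b) →
      ∃ s : C →+ B, ψ.comp s = AddMonoidHom.id C) :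
    -- tA is divisible:
    (∀ a : A, IsOfFinAddOrder a → ∀ n : ℕ, 0 < n →
      ∃ x : A, IsOfFinAddOrder x ∧ n • x = a) ∧
    -- A ≅ tA ⊕ A/tA:
    Nonempty (A ≃+ ((AddCommGroup.torsion A) × (A ⧸ AddCommGroup.torsion A))) ∧
    -- A/tA is cotorsion:
    (∀ (X : Type u) (_ : AddCommGroup X)
      (ι : (A ⧸ AddCommGroup.torsion A) →+ X) (π : X →+ ℚ),
      Function.Injective ι → Function.Surjective π →
      (∀ x : X, π x = 0 ↔ x ∈ ι.range) →
      ∃ s : ℚ →+ X, π.comp s = AddMonoidHom.id ℚ) := by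
  have hA : IsTInjective A := fun B C _ _ φ ψ h =>
    hsplit B C _ _ φ ψ h.injective h.surjective h.exact h.exists_isOfFinAddOrder_preimage
      fun _ hb hb0 => h.exists_isOfFinAddOrder_of_apply_eq_zero hb hb0
  obtain ⟨e⟩ := hA.nonempty_addEquiv_torsion_prod
  exact ⟨fun a ha n hn => hA.exists_isOfFinAddOrder_nsmul_eq ha hn.ne', ⟨e⟩,
    fun X _ ι π hι hπ hexact => hA.exists_section_rat_of_addEquiv_prod e hι hπ hexact⟩
end

section
/- Let D be a torsion-free abelian group such that every short exact sequence 0 → D → X → ℚ → 0 of abelian groups splits. Then every short exact sequence 0 → D →φ B →ψ C → 0 of abelian groups that is a t-extension splits: there exists a group homomorphism s : C → B with ψ ∘ s = id_C. -/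
universe u

/-!
Dividing out torsion turns a t-extension `0 → D → B → C → 0` into an extension
`0 → D → B/tB → C/tC → 0`, and a retraction of the latter yields one of the former; so it is
enough to split extensions of `D` by a torsion-free group `C`. Embed `D` into its divisible hull
`G`, an injective group: such an extension splits as soon as every map `C → G/D` lifts to `G`.
Since `G/D` is divisible, a map `C → G/D` extends to the divisible hull of `C`, a `ℚ`-vector
space, and maps out of `⊕ ℚ` lift coordinatewise, because lifting `u : ℚ → G/D` to `G` amounts
to splitting the pullback of `G → G/D` along `u`, an extension of `D` by `ℚ`.
-/

open Function QuotientAddGroup AddCommGroup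

def IsCotorsion (D : Type u) [AddCommGroup D] : Prop :=
  ∀ (X : Type u) [AddCommGroup X] (ι : D →+ X) (π : X →+ ℚ),
    Injective ι → Surjective π → Exact ι π → ∃ s : ℚ →+ X, π.comp s = .id ℚ

theorem Module.Baer.of_surjective_of_module_rat {V W : Type*} [AddCommGroup V] [Module ℚ V]
    [AddCommGroup W] (f : V →+ W) (hf : Surjective f) : Module.Baer ℤ W := by
  let : DivisibleBy W ℤ := divisibleByOfSMulRightSurj W ℤ fun {n} hn w => by
    obtain ⟨v, rfl⟩ := hf w
    refine ⟨f ((n : ℚ)⁻¹ • v), ?_⟩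
    change n • f _ = f v
    rw [← map_zsmul, ← Int.cast_smul_eq_zsmul ℚ, smul_smul,
      mul_inv_cancel₀ (Int.cast_ne_zero.2 hn), one_smul]
  exact .of_divisible W

theorem AddMonoidHom.exists_comp_eq_of_module_rat {G T V : Type*} [AddCommGroup G]
    [AddCommGroup T] [AddCommGroup V] [Module ℚ V] (q : G →+ T)
    (hq : ∀ u : ℚ →+ T, ∃ w : ℚ →+ G, q.comp w = u) (f : V →+ T) :
    ∃ F : V →+ G, q.comp F = f := by
  let b := Module.Basis.ofVectorSpace ℚ V
  choose w hw using fun i => hq (f.comp (LinearMap.toSpanSingleton ℚ V (b i)).toAddMonoidHom)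
  refine ⟨(Finsupp.liftAddHom w).comp b.repr.toLinearMap.toAddMonoidHom, ?_⟩
  suffices q.comp (Finsupp.liftAddHom w) = f.comp b.repr.symm.toLinearMap.toAddMonoidHom by
    ext v
    simpa using congr($this (b.repr v))
  ext i r
  simpa using congr($(hw i) r)

theorem IsCotorsion.exists_comp_mk_eq {D G : Type u} [AddCommGroup D] [AddCommGroup G]
    (hD : IsCotorsion D) {ι : D →+ G} (hι : Injective ι) (u : ℚ →+ G ⧸ ι.range) :
    ∃ w : ℚ →+ G, (mk' ι.range).comp w = u := by
  -- the pullback of `G → G ⧸ ι.range` along `u`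
  let X : AddSubgroup (G × ℚ) := ((mk' ι.range).comp (.fst G ℚ) - u.comp (.snd G ℚ)).ker
  have mem_X (x : G × ℚ) : x ∈ X ↔ (x.1 : G ⧸ ι.range) = u x.2 := by
    simp [X, sub_eq_zero]
  let ι' : D →+ X := (ι.prod 0).codRestrict X fun d => (mem_X _).2 (by simp)
  let π : X →+ ℚ := (AddMonoidHom.snd G ℚ).comp X.subtype
  have hι' : Injective ι' := fun d d' h => hι congr(($h : G × ℚ).1)
  have hπ : Surjective π := fun r =>
    let ⟨a, ha⟩ := mk_surjective (u r)
    ⟨⟨(a, r), (mem_X _).2 ha⟩, rfl⟩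
  have hexact : Exact ι' π := by
    refine fun x => ⟨fun hx0 => ?_, by rintro ⟨d, rfl⟩; rfl⟩
    obtain ⟨⟨a, r⟩, hx⟩ := x
    obtain rfl : r = 0 := hx0
    have ha : (a : G ⧸ ι.range) = 0 := by simpa using (mem_X _).1 hx
    obtain ⟨d, hd⟩ := AddMonoidHom.mem_range.1 ((eq_zero_iff a).1 ha)
    exact ⟨d, by ext <;> simp [ι', hd]⟩
  obtain ⟨s, hs⟩ := hD X ι' π hι' hπ hexact
  refine ⟨(AddMonoidHom.fst G ℚ).comp (X.subtype.comp s), AddMonoidHom.ext fun r => ?_⟩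
  have hsr : (s r : G × ℚ).2 = r := congr($hs r)
  simpa [hsr] using (mem_X _).1 (s r).2

theorem IsCotorsion.exists_comp_mk_eq_of_isAddTorsionFree {D G : Type u} {C : Type*}
    [AddCommGroup D] [AddCommGroup G] [AddCommGroup C] [IsAddTorsionFree C]
    (hD : IsCotorsion D) {ι : D →+ G} (hι : Injective ι) (hG : Module.Baer ℤ (G ⧸ ι.range))
    (χ : C →+ G ⧸ ι.range) : ∃ w : C →+ G, (mk' ι.range).comp w = χ := by
  obtain ⟨χV, hχV⟩ := hG.extension_property_addMonoidHom (DivisibleHull.coeAddMonoidHom C)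
    DivisibleHull.coe_injective χ
  obtain ⟨W, hW⟩ := (mk' ι.range).exists_comp_eq_of_module_rat (hD.exists_comp_mk_eq hι) χV
  exact ⟨W.comp (DivisibleHull.coeAddMonoidHom C), by rw [← AddMonoidHom.comp_assoc, hW, hχV]⟩

section Extension

variable {D B C : Type*} [AddCommGroup D] [AddCommGroup B] [AddCommGroup C]
  {φ : D →+ B} {ψ : B →+ C}

theorem exists_retraction_of_forall_exists_comp_mk_eq {G : Type*} [AddCommGroup G]
    (hφ : Injective φ) (hψ : Surjective ψ) (hex : Exact φ ψ) (hG : Module.Baer ℤ G)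
    {ι : D →+ G} (hι : Injective ι)
    (hlift : ∀ χ : C →+ G ⧸ ι.range, ∃ w : C →+ G, (mk' ι.range).comp w = χ) :
    ∃ r : B →+ D, r.comp φ = .id D := by
  obtain ⟨g, hg⟩ := hG.extension_property_addMonoidHom φ hφ ι
  have hker : ψ.ker ≤ ((mk' ι.range).comp g).ker := by
    intro b hb
    obtain ⟨d, rfl⟩ := (hex b).1 hb
    simp [← hg]
  obtain ⟨w, hw⟩ := hlift (ψ.liftOfSurjective hψ ⟨_, hker⟩)
  have hrange (b : B) : g b - w (ψ b) ∈ ι.range := by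
    rw [← eq_zero_iff, mk_sub, sub_eq_zero]
    exact (congr($hw (ψ b)).trans (ψ.liftOfRightInverse_comp_apply _ _ _ b)).symm
  choose r hr using hrange
  refine ⟨AddMonoidHom.mk' r fun a b => hι ?_, AddMonoidHom.ext fun d => hι ?_⟩
  · simp only [map_add, hr]
    abel
  · simpa [hr, hex.apply_apply_eq_zero] using congr($hg d)

theorem IsCotorsion.exists_retraction_of_isAddTorsionFree [IsAddTorsionFree D]
    [IsAddTorsionFree C] (hD : IsCotorsion D) (hφ : Injective φ) (hψ : Surjective ψ)
    (hex : Exact φ ψ) :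
    ∃ r : B →+ D, r.comp φ = .id D :=
  have hι : Injective (DivisibleHull.coeAddMonoidHom D) := DivisibleHull.coe_injective
  exists_retraction_of_forall_exists_comp_mk_eq hφ hψ hex
    (.of_surjective_of_module_rat (.id _) surjective_id) hι
    (hD.exists_comp_mk_eq_of_isAddTorsionFree hι
      (.of_surjective_of_module_rat (mk' _) (mk'_surjective _)))

theorem Function.Exact.exists_section_of_retraction (hex : Exact φ ψ) (hφ : Injective φ)
    (hψ : Surjective ψ) {r : B →+ D} (hr : r.comp φ = .id D) :
    ∃ s : C →+ B, ψ.comp s = .id C := by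
  have split :=
    (Exact.split_tfae (f := φ.toIntLinearMap) (g := ψ.toIntLinearMap) hex hφ hψ).out 1 0
  obtain ⟨s, hs⟩ := split.1 ⟨r.toIntLinearMap, congr(AddMonoidHom.toIntLinearMap $hr)⟩
  exact ⟨s.toAddMonoidHom, congr(LinearMap.toAddMonoidHom $hs)⟩

theorem injective_mk_torsion_comp [IsAddTorsionFree D] (hφ : Injective φ) :
    Injective ((mk' (torsion B)).comp φ) := by
  refine (injective_iff_map_eq_zero _).2 fun d hd => ?_
  rw [AddMonoidHom.comp_apply, mk'_apply, eq_zero_iff, mem_torsion,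
    (show Injective (φ : D →+ B) from hφ).isOfFinAddOrder_iff] at hd
  exact (isOfFinAddOrder_iff_eq_zero d).1 hd

theorem exact_mk_torsion_comp_map (hex : Exact φ ψ)
    (htC : ∀ c : C, IsOfFinAddOrder c → ∃ b : B, IsOfFinAddOrder b ∧ ψ b = c) :
    Exact ((mk' (torsion B)).comp φ) (map (torsion B) (torsion C) ψ (le_comap_torsion ψ)) := by
  refine fun x => ⟨fun hx => ?_, ?_⟩
  · induction x using QuotientAddGroup.induction_on with | H b => ?_
    obtain ⟨b', hb', hψb'⟩ := htC (ψ b) ((eq_zero_iff _).1 hx)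
    obtain ⟨d, hd⟩ := (hex (b - b')).1 (by rw [map_sub, hψb', sub_self])
    refine ⟨d, ?_⟩
    simp [hd, (eq_zero_iff b').2 ((mem_torsion b').2 hb')]
  · rintro ⟨d, rfl⟩
    simp [hex.apply_apply_eq_zero]

end Extension

/-- Every t-extension of a torsion-free cotorsion group splits. -/
theorem tExtension_splits_of_torsionFree_cotorsion
    (D : Type u) [AddCommGroup D]
    -- D is torsion-free:
    (hD : ∀ d : D, IsOfFinAddOrder d → d = 0)
    -- D is cotorsion: every extension of D by ℚ splits:
    (hcot : ∀ (X : Type u) (_ : AddCommGroup X) (ι : D →+ X) (π : X →+ ℚ),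
      Function.Injective ι → Function.Surjective π →
      (∀ x : X, π x = 0 ↔ x ∈ ι.range) →
      ∃ s : ℚ →+ X, π.comp s = AddMonoidHom.id ℚ) :
    -- every t-extension of D splits:
    ∀ (B C : Type u) (_ : AddCommGroup B) (_ : AddCommGroup C)
      (φ : D →+ B) (ψ : B →+ C),
      Function.Injective φ → Function.Surjective ψ →
      (∀ b : B, ψ b = 0 ↔ b ∈ φ.range) →
      (∀ c : C, IsOfFinAddOrder c → ∃ b : B, IsOfFinAddOrder b ∧ ψ b = c) →
      (∀ b : B, IsOfFinAddOrder b → ψ b = 0 → ∃ d : D, IsOfFinAddOrder d ∧ φ d = b) →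
      ∃ s : C →+ B, ψ.comp s = AddMonoidHom.id C := by
  intro B C _ _ φ ψ hφ hψ hex htC _
  have : IsAddTorsionFree D := .of_not_isOfFinAddOrder fun d hd h => hd (hD d h)
  have hD' : IsCotorsion D := fun X _ => hcot X _
  obtain ⟨r, hr⟩ := hD'.exists_retraction_of_isAddTorsionFree (injective_mk_torsion_comp hφ)
    (map_surjective_of_surjective _ _ _ ((mk'_surjective _).comp hψ) _)
    (exact_mk_torsion_comp_map hex htC)
  exact Exact.exists_section_of_retraction hex hφ hψ (r := r.comp (mk' (torsion B))) hr
end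

section
/- Let C be an abelian group such that for all abelian groups A and B, every short exact sequence 0 → A →φ B →ψ C → 0 that is a t-extension splits (there exists a group homomorphism s : C → B with ψ ∘ s = id_C). Then C is a free abelian group. -/
/-!
A t-projective group `C` is torsion-free: if `c` has order `n` and `χ : C → ℚ/ℤ` is a
character, the pullback of `χ` along multiplication by `n` on `ℚ/ℤ` is a t-extension of `C`
(divisibility gives surjectivity and torsion lifts), and a splitting `s` forces
`χ c = n • (s c).2 = (s (n • c)).2 = 0`. Characters separate points, so `c = 0`.
For torsion-free `C` the free cover `(C →₀ ℤ) → C` is a t-extension, so it splits and `C`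
embeds into a free abelian group. Submodules of free modules over a PID are free: well-order a
basis and pick, for each index `i`, an element of `N` supported below `i` whose `i`-th
coordinate generates the ideal of all such coordinates; those with nonzero `i`-th coordinate
form a basis of `N`.
-/

universe u

open Set

namespace Finsupp

theorem eq_zero_or_exists_support_subset_Iic {ι M : Type*} [LinearOrder ι] [Zero M]
    (f : ι →₀ M) : f = 0 ∨ ∃ m ∈ f.support, ↑f.support ⊆ Iic m := by
  rcases f.support.eq_empty_or_nonempty with h | h
  · exact .inl (support_eq_empty.1 h)
  · exact .inr ⟨_, f.support.max'_mem h, fun i hi => f.support.le_max' i hi⟩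

theorem linearIndependent_of_triangular {ι κ R : Type*} [LinearOrder ι] [LinearOrder κ]
    [Ring R] [NoZeroDivisors R] {e : κ → ι} (he : StrictMono e) (v : κ → ι →₀ R)
    (hv : ∀ k, ↑(v k).support ⊆ Iic (e k)) (hvk : ∀ k, v k (e k) ≠ 0) :
    LinearIndependent R v := by
  classical
  rw [linearIndependent_iff']
  intro t
  induction t using Finset.induction_on_max with
  | empty => simp
  | insert a t hlt ih =>
    intro g hg
    have hvanish : ∀ k ∈ t, v k (e a) = 0 := fun k hk =>
      notMem_support_iff.1 fun h => (he (hlt k hk)).not_ge (hv k h)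
    rw [Finset.sum_insert fun h => lt_irrefl a (hlt a h)] at hg
    have hga : g a = 0 := by
      have := congrArg (· (e a)) hg
      simp only [coe_add, Pi.add_apply, coe_smul, Pi.smul_apply, smul_eq_mul, finsetSum_apply,
        coe_zero, Pi.zero_apply] at this
      rw [Finset.sum_eq_zero fun k hk => by rw [hvanish k hk, mul_zero], add_zero] at this
      exact (mul_eq_zero.1 this).resolve_right (hvk a)
    rw [hga, zero_smul, zero_add] at hg
    intro k hk
    rcases Finset.mem_insert.1 hk with rfl | hk
    exacts [hga, ih g hg k hk]

end Finsupp

namespace Submodule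

open Finsupp

variable {ι R : Type*} [LinearOrder ι] [CommRing R]

theorem exists_apply_dvd_of_support_subset_Iic [IsPrincipalIdealRing R]
    (N : Submodule R (ι →₀ R)) (i : ι) :
    ∃ y ∈ N, ↑y.support ⊆ Iic i ∧
      ∀ x : ι →₀ R, x ∈ N → ↑x.support ⊆ Iic i → y i ∣ x i := by
  let I : Ideal R := (N ⊓ supported R R (Iic i)).map (lapply i)
  obtain ⟨y, ⟨hyN, hy⟩, hyi⟩ := IsPrincipal.generator_mem I
  refine ⟨y, hyN, hy, fun x hx hxi => ?_⟩
  rw [show y i = IsPrincipal.generator I from hyi]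
  exact (IsPrincipal.mem_iff_generator_dvd I).1 ⟨x, ⟨hx, hxi⟩, rfl⟩

theorem le_span_of_triangular [WellFoundedLT ι] (N : Submodule R (ι →₀ R)) (y : ι → ι →₀ R)
    (hyN : ∀ i, y i ∈ N) (hy : ∀ i, ↑(y i).support ⊆ Iic i)
    (hdvd : ∀ i, ∀ x : ι →₀ R, x ∈ N → ↑x.support ⊆ Iic i → y i i ∣ x i) :
    N ≤ span R (range fun k : {i // y i i ≠ 0} => y k) := by
  set S := span R (range fun k : {i // y i i ≠ 0} => y k)
  have hmem_Iic : ∀ (i : ι) (x : ι →₀ R), x ∈ N → ↑x.support ⊆ Iic i → x ∈ S := by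
    intro i
    induction i using WellFoundedLT.induction with
    | ind i ih =>
    intro x hx hxi
    obtain ⟨c, hc⟩ := hdvd i x hx hxi
    obtain ⟨z, hzS, hzN, hz, hzi⟩ :
        ∃ z ∈ S, z ∈ N ∧ ↑z.support ⊆ Iic i ∧ z i = x i := by
      by_cases h : y i i = 0
      · exact ⟨0, zero_mem _, zero_mem _, by simp, by simp [hc, h]⟩
      · exact ⟨c • y i, smul_mem _ _ (subset_span ⟨⟨i, h⟩, rfl⟩), N.smul_mem _ (hyN i),
          (Finset.coe_subset.2 support_smul).trans (hy i), by simp [hc, mul_comm]⟩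
    have hsub : ↑(x - z).support ⊆ Iio i := fun j hj => by
      have hji : j ≤ i := by
        rcases Finset.mem_union.1 (support_sub hj) with h | h
        exacts [hxi h, hz h]
      refine hji.lt_of_ne ?_
      rintro rfl
      simp [hzi] at hj
    rw [← sub_add_cancel x z]
    refine add_mem ?_ hzS
    rcases (x - z).eq_zero_or_exists_support_subset_Iic with h0 | ⟨m, hm, hsm⟩
    · rw [h0]; exact zero_mem _
    · exact ih m (hsub hm) _ (sub_mem hx hzN) hsm
  intro x hx
  rcases x.eq_zero_or_exists_support_subset_Iic with rfl | ⟨m, -, hm⟩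
  exacts [zero_mem _, hmem_Iic m x hx hm]

theorem free_of_finsupp [IsDomain R] [IsPrincipalIdealRing R] [WellFoundedLT ι]
    (N : Submodule R (ι →₀ R)) : Module.Free R N := by
  choose y hyN hy hdvd using N.exists_apply_dvd_of_support_subset_Iic
  let v : {i // y i i ≠ 0} → ι →₀ R := fun k => y k
  have hli : LinearIndependent R v :=
    linearIndependent_of_triangular (Subtype.strictMono_coe _) v (fun k => hy k) fun k => k.2
  have hspan : span R (range v) = N :=
    le_antisymm (span_le.2 <| range_subset_iff.2 fun k => hyN k)
      (N.le_span_of_triangular y hyN hy hdvd)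
  exact .of_basis ((Module.Basis.span hli).map (LinearEquiv.ofEq _ _ hspan))

theorem free_of_free {M : Type*} [IsDomain R] [IsPrincipalIdealRing R] [AddCommGroup M]
    [Module R M] [Module.Free R M] (N : Submodule R M) : Module.Free R N := by
  let κ := Module.Free.ChooseBasisIndex R M
  let b := Module.Free.chooseBasis R M
  let _ : LinearOrder κ := IsWellOrder.linearOrder WellOrderingRel
  have : WellFoundedLT κ := ⟨IsWellFounded.wf (r := WellOrderingRel)⟩
  have := (N.map b.repr.toLinearMap).free_of_finsupp
  exact .of_equiv (N.equivMapOfInjective _ b.repr.injective).symm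

end Submodule

def IsTProjective (C : Type u) [AddCommGroup C] : Prop :=
  ∀ (A B : Type u) (_ : AddCommGroup A) (_ : AddCommGroup B) (φ : A →+ B) (ψ : B →+ C),
    Function.Injective φ → Function.Surjective ψ → (∀ b : B, ψ b = 0 ↔ b ∈ φ.range) →
    (∀ c : C, IsOfFinAddOrder c → ∃ b : B, IsOfFinAddOrder b ∧ ψ b = c) →
    (∀ b : B, IsOfFinAddOrder b → ψ b = 0 → ∃ a : A, IsOfFinAddOrder a ∧ φ a = b) →
    ∃ s : C →+ B, ψ.comp s = AddMonoidHom.id C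

namespace IsTProjective

variable {C : Type u} [AddCommGroup C]

theorem exists_comp_eq_id (hC : IsTProjective C) {B : Type u} [AddCommGroup B] {ψ : B →+ C}
    (hψ : Function.Surjective ψ)
    (htors : ∀ c : C, IsOfFinAddOrder c → ∃ b : B, IsOfFinAddOrder b ∧ ψ b = c) :
    ∃ s : C →+ B, ψ.comp s = AddMonoidHom.id C :=
  hC ψ.ker B _ _ ψ.ker.subtype ψ Subtype.val_injective hψ (fun b => by simp) htors
    fun b hb hb0 => ⟨⟨b, hb0⟩, AddSubmonoid.isOfFinAddOrder_coe.1 hb, rfl⟩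

theorem map_eq_zero_of_isOfFinAddOrder (hC : IsTProjective C) {D : Type u} [AddCommGroup D]
    [DivisibleBy D ℤ] (χ : C →+ D) {c : C} (hc : IsOfFinAddOrder c) : χ c = 0 := by
  set n := addOrderOf c
  have hn : n ≠ 0 := hc.addOrderOf_pos.ne'
  have hdiv (d : D) : ∃ d', n • d' = d :=
    ⟨DivisibleBy.div d (n : ℤ), by
      rw [← natCast_zsmul]; exact DivisibleBy.div_cancel d (by exact_mod_cast hn)⟩
  let P : AddSubgroup (C × D) := (χ.comp (.fst C D)).eqLocus (n • .snd C D)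
  obtain ⟨s, hs⟩ := hC.exists_comp_eq_id (ψ := (AddMonoidHom.fst C D).comp P.subtype)
    (fun c₀ => by
      obtain ⟨d, hd⟩ := hdiv (χ c₀)
      exact ⟨⟨(c₀, d), hd.symm⟩, rfl⟩)
    (fun c₀ hc₀ => by
      obtain ⟨d, hd⟩ := hdiv (χ c₀)
      have hd_tors : IsOfFinAddOrder d :=
        (isOfFinAddOrder_nsmul.1 (hd ▸ χ.isOfFinAddOrder hc₀)).resolve_right hn
      exact ⟨⟨(c₀, d), hd.symm⟩,
        AddSubmonoid.isOfFinAddOrder_coe.1 (hc₀.prod_mk hd_tors), rfl⟩)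
  have hsc : (s c : C × D).1 = c := DFunLike.congr_fun hs c
  have hsn : n • (s c : C × D).2 = 0 := by
    have := congrArg (fun x : P => (x : C × D).2) (map_nsmul s n c)
    simpa [n, addOrderOf_nsmul_eq_zero] using this.symm
  have hmem : χ (s c : C × D).1 = n • (s c : C × D).2 := (s c).2
  rwa [hsc, hsn] at hmem

theorem eq_zero_of_isOfFinAddOrder (hC : IsTProjective C) {c : C} (hc : IsOfFinAddOrder c) :
    c = 0 := by
  by_contra hc0
  obtain ⟨χ, hχ⟩ := CharacterModule.exists_character_apply_ne_zero_of_ne_zero hc0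
  let χu : C →+ ULift.{u} (AddCircle (1 : ℚ)) := AddEquiv.ulift.symm.toAddMonoidHom.comp χ
  exact hχ (AddEquiv.ulift.symm.injective <|
    (hC.map_eq_zero_of_isOfFinAddOrder χu hc).trans (map_zero _).symm)

end IsTProjective

/-- If every t-extension by `C` splits, then `C` is a free abelian group. -/
theorem free_of_tProjective
    (C : Type u) [AddCommGroup C]
    -- every t-extension by C splits:
    (hsplit : ∀ (A B : Type u) (_ : AddCommGroup A) (_ : AddCommGroup B)
      (φ : A →+ B) (ψ : B →+ C),
      Function.Injective φ → Function.Surjective ψ →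
      (∀ b : B, ψ b = 0 ↔ b ∈ φ.range) →
      (∀ c : C, IsOfFinAddOrder c → ∃ b : B, IsOfFinAddOrder b ∧ ψ b = c) →
      (∀ b : B, IsOfFinAddOrder b → ψ b = 0 → ∃ a : A, IsOfFinAddOrder a ∧ φ a = b) →
      ∃ s : C →+ B, ψ.comp s = AddMonoidHom.id C) :
    -- C is a free abelian group:
    Module.Free ℤ C := by
  let π : (C →₀ ℤ) →+ C := (Finsupp.linearCombination ℤ id).toAddMonoidHom
  have htf (c : C) (hc : IsOfFinAddOrder c) : c = 0 :=
    IsTProjective.eq_zero_of_isOfFinAddOrder hsplit hc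
  obtain ⟨s, hs⟩ := IsTProjective.exists_comp_eq_id hsplit (ψ := π)
    (Finsupp.linearCombination_id_surjective ℤ C) fun c hc =>
      ⟨0, IsOfFinAddOrder.zero, by rw [map_zero, htf c hc]⟩
  have hs_inj : Function.Injective s :=
    Function.LeftInverse.injective (g := π) (DFunLike.congr_fun hs)
  have := (LinearMap.range s.toIntLinearMap).free_of_free
  exact .of_equiv (LinearEquiv.ofInjective s.toIntLinearMap hs_inj).symm
end
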